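/- Let V = {x ∈ ℚ³ : x₁ + x₂ + x₃ = 0}, identified with its dual via the standard inner product on ℚ³, and let Φ = {±(e_i − e_j) : 1 ≤ i < j ≤ 3} ∪ {±(2e_i − e_j − e_k) : {i,j,k} = {1,2,3}} with coroots α∨ = 2α/(α,α) (so the coroots are ±(e_i − e_j) and ±(2e_i − e_j − e_k)/3). This is a root system of type G₂. Then no nonzero element of the weight lattice P is quasi-constant. -/

import Mathlib

namespace QC

open Classical

variable {V : Type*} [AddCommGroup V] [Module ℚ V]

/-- The contragredient action of a linear automorphism `w` of `V` on the dual space,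
characterized by `⟨w x, coact w f⟩ = ⟨x, f⟩`, i.e. `(coact w f) x = f (w⁻¹ x)`. -/
noncomputable def coact (w : V ≃ₗ[ℚ] V) (f : Module.Dual ℚ V) : Module.Dual ℚ V :=
  w.symm.dualMap f

/-- The Weyl group of the data `(Φ, co)`: the subgroup of linear automorphisms of `V`
generated by the reflections `s_α : x ↦ x - ⟨x, α∨⟩ α` for `α ∈ Φ`. -/
def weylGroup (Φ : Set V) (co : V → Module.Dual ℚ V) : Subgroup (V ≃ₗ[ℚ] V) :=
  Subgroup.closure { w : V ≃ₗ[ℚ] V | ∃ α ∈ Φ, ∀ x : V, w x = x - (co α x) • α }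

/-- `χ ∈ V` is quasi-constant with respect to a group `G` of automorphisms
(typically the Weyl group, or `W ⋊ Γ`). -/
def IsQuasiConstantWrt (Φ : Set V) (co : V → Module.Dual ℚ V)
    (G : Subgroup (V ≃ₗ[ℚ] V)) (χ : V) : Prop :=
  ∀ α ∈ Φ, co α χ ≠ 0 → ∀ σ, σ ∈ G → coact σ (co α) χ / co α χ ∈ ({-1, 0, 1} : Set ℚ)

/-- `χ ∈ V` is quasi-constant (with respect to the Weyl group). -/
def IsQuasiConstant (Φ : Set V) (co : V → Module.Dual ℚ V) (χ : V) : Prop :=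
  IsQuasiConstantWrt Φ co (weylGroup Φ co) χ

/-- A coweight `μ ∈ V∨` is quasi-constant with respect to a group `G`. -/
def IsQuasiConstantCowtWrt (Φ : Set V) (G : Subgroup (V ≃ₗ[ℚ] V))
    (μ : Module.Dual ℚ V) : Prop :=
  ∀ α ∈ Φ, μ α ≠ 0 → ∀ σ, σ ∈ G → μ (σ α) / μ α ∈ ({-1, 0, 1} : Set ℚ)

/-- A coweight `μ ∈ V∨` is quasi-constant (with respect to the Weyl group). -/
def IsQuasiConstantCowt (Φ : Set V) (co : V → Module.Dual ℚ V)
    (μ : Module.Dual ℚ V) : Prop :=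
  IsQuasiConstantCowtWrt Φ (weylGroup Φ co) μ

/-- `χ ∈ V` is minuscule: `⟨χ, α∨⟩ ∈ {-1,0,1}` for all roots `α`. -/
def IsMinuscule (Φ : Set V) (co : V → Module.Dual ℚ V) (χ : V) : Prop :=
  ∀ α ∈ Φ, co α χ ∈ ({-1, 0, 1} : Set ℚ)

/-- `μ ∈ V∨` is minuscule: `⟨α, μ⟩ ∈ {-1,0,1}` for all roots `α`. -/
def IsMinusculeCowt (Φ : Set V) (μ : Module.Dual ℚ V) : Prop :=
  ∀ α ∈ Φ, μ α ∈ ({-1, 0, 1} : Set ℚ)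

/-- The weight lattice `P = {χ ∈ V : ⟨χ, β∨⟩ ∈ ℤ for all β ∈ Φ}`. -/
def weightLattice (Φ : Set V) (co : V → Module.Dual ℚ V) : Set V :=
  { χ | ∀ β ∈ Φ, ∃ n : ℤ, co β χ = (n : ℚ) }

/-- The coweight lattice `P∨ = {μ ∈ V∨ : ⟨α, μ⟩ ∈ ℤ for all α ∈ Φ}`. -/
def coweightLattice (Φ : Set V) : Set (Module.Dual ℚ V) :=
  { μ | ∀ α ∈ Φ, ∃ n : ℤ, μ α = (n : ℚ) }

/-- `(Φ, co)` is a reduced root system (not necessarily spanning) in `V`, where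
`co α` is the coroot `α∨` viewed as a linear functional, with the Weyl group acting
compatibly on roots and coroots. -/
structure IsRootSystem (Φ : Set V) (co : V → Module.Dual ℚ V) : Prop where
  finite : Φ.Finite
  ne_zero : ∀ α ∈ Φ, α ≠ 0
  pair_self : ∀ α ∈ Φ, co α α = 2
  refl_mem : ∀ α ∈ Φ, ∀ β ∈ Φ, β - (co α β) • α ∈ Φ
  pair_int : ∀ α ∈ Φ, ∀ β ∈ Φ, ∃ n : ℤ, co α β = (n : ℚ)
  reduced : ∀ α ∈ Φ, ∀ c : ℚ, c • α ∈ Φ → c = 1 ∨ c = -1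
  weyl_root : ∀ w, w ∈ weylGroup Φ co → ∀ α ∈ Φ, w α ∈ Φ
  weyl_coroot : ∀ w, w ∈ weylGroup Φ co → ∀ α ∈ Φ, co (w α) = coact w (co α)

/-- `Φ` is irreducible: it is nonempty and admits no nontrivial orthogonal decomposition. -/
def IsIrreducible (Φ : Set V) (co : V → Module.Dual ℚ V) : Prop :=
  Φ.Nonempty ∧ ∀ Ψ ⊆ Φ, (∀ α ∈ Ψ, ∀ β ∈ Φ \ Ψ, co α β = 0) → Ψ = ∅ ∨ Ψ = Φ

/-- `Δ` is a base (set of simple roots) of `Φ`. -/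
structure IsBase (Φ : Set V) (co : V → Module.Dual ℚ V) (Δ : Set V) : Prop where
  subset : Δ ⊆ Φ
  indep : LinearIndependent ℚ ((↑) : Δ → V)
  span_eq : Submodule.span ℚ Δ = Submodule.span ℚ Φ
  decomp : ∀ α ∈ Φ, ∃ c : V →₀ ℕ, ↑c.support ⊆ Δ ∧
      (α = c.sum (fun v n => (n : ℚ) • v) ∨ α = - c.sum (fun v n => (n : ℚ) • v))

/-- `η` is the fundamental weight `η(α)` for the simple root `α ∈ Δ`:
`⟨η, β∨⟩ = δ_{αβ}` for `β ∈ Δ`. -/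
def IsFundWeight (co : V → Module.Dual ℚ V) (Δ : Set V) (α : V) (η : V) : Prop :=
  ∀ β ∈ Δ, co β η = if β = α then 1 else 0

/-- `f` is the fundamental coweight `η(α∨)` for the simple root `α ∈ Δ`:
`⟨β, f⟩ = δ_{αβ}` for `β ∈ Δ`. -/
def IsFundCoweight (Δ : Set V) (α : V) (f : Module.Dual ℚ V) : Prop :=
  ∀ β ∈ Δ, f β = if β = α then 1 else 0

/-- `χ` is cominuscule: `χ = η(α)` for some base `Δ` and `α ∈ Δ` such that the
fundamental coweight `η(α∨)` is minuscule. -/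
def IsCominuscule (Φ : Set V) (co : V → Module.Dual ℚ V) (χ : V) : Prop :=
  χ ∈ Submodule.span ℚ Φ ∧
  ∃ Δ : Set V, IsBase Φ co Δ ∧ ∃ α ∈ Δ, IsFundWeight co Δ α χ ∧
    ∀ f : Module.Dual ℚ V, IsFundCoweight Δ α f → IsMinusculeCowt Φ f

/-- `μ` is a cominuscule coweight: `μ = η(α∨)` for some base `Δ` and `α ∈ Δ` such that
the fundamental weight `η(α)` is minuscule. -/
def IsCominusculeCowt (Φ : Set V) (co : V → Module.Dual ℚ V)
    (μ : Module.Dual ℚ V) : Prop :=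
  ∃ Δ : Set V, IsBase Φ co Δ ∧ ∃ α ∈ Δ, IsFundCoweight Δ α μ ∧
    ∀ η : V, IsFundWeight co Δ α η → IsMinuscule Φ co η

/-- `χ` is `Δ`-dominant. -/
def IsDominant (co : V → Module.Dual ℚ V) (Δ : Set V) (χ : V) : Prop :=
  ∀ α ∈ Δ, 0 ≤ co α χ

/-- `μ ∈ V∨` is `Δ`-dominant. -/
def IsDominantCowt (Δ : Set V) (μ : Module.Dual ℚ V) : Prop :=
  ∀ α ∈ Δ, 0 ≤ μ α

/-- `χ` is orbitally `p`-close. -/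
def IsOrbitallyPClose (Φ : Set V) (co : V → Module.Dual ℚ V) (p : ℕ) (χ : V) : Prop :=
  ∀ α ∈ Φ, co α χ ≠ 0 → ∀ w, w ∈ weylGroup Φ co →
    |coact w (co α) χ / co α χ| ≤ (p : ℚ) - 1

end QC

namespace QC

/-- The linear functional `y ↦ ∑ i, x i * y i` given by the standard inner product. -/
noncomputable def dotF (n : ℕ) (x : Fin n → ℚ) : Module.Dual ℚ (Fin n → ℚ) :=
  ∑ i, x i • LinearMap.proj i

/-- The coroot `α∨ = 2α/(α,α)` of `α`, as a linear functional via the standard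
inner product. -/
noncomputable def stdCoroot (n : ℕ) (α : Fin n → ℚ) : Module.Dual ℚ (Fin n → ℚ) :=
  (2 / dotF n α α) • dotF n α

/-- The `i`-th standard basis vector `eᵢ` of `ℚⁿ`. -/
def eVec (n : ℕ) (i : Fin n) : Fin n → ℚ := Pi.single i 1

end QC

namespace QC

/-- The hyperplane `{x ∈ ℚ³ : x₁ + x₂ + x₃ = 0}`. -/
noncomputable def sumZero : Submodule ℚ (Fin 3 → ℚ) := LinearMap.ker (dotF 3 fun _ => 1)

/-- The `G₂` root system inside `ℚ³`:
`{±(eᵢ − eⱼ)} ∪ {±(2eᵢ − eⱼ − e_k)}` for `{i,j,k} = {1,2,3}`. -/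
def g2rootsAmbient : Set (Fin 3 → ℚ) :=
  {v | ∃ i j : Fin 3, i ≠ j ∧ v = eVec _ i - eVec _ j} ∪
  {v | ∃ i j k : Fin 3, i ≠ j ∧ i ≠ k ∧ j ≠ k ∧
      (v = (2 : ℚ) • eVec _ i - eVec _ j - eVec _ k ∨
       v = -((2 : ℚ) • eVec _ i - eVec _ j - eVec _ k))}

/-- The `G₂` root system viewed inside the hyperplane `V = {x : x₁ + x₂ + x₃ = 0}`. -/
def g2Φ : Set sumZero := { α | (α : Fin 3 → ℚ) ∈ g2rootsAmbient }

/-- The coroot `α∨ = 2α/(α,α)` as a functional on the hyperplane. -/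
noncomputable def g2co (α : sumZero) : Module.Dual ℚ sumZero :=
  (stdCoroot 3 (α : Fin 3 → ℚ)).domRestrict sumZero

end QC

namespace QC

lemma mem_sumZero (v : Fin 3 → ℚ) : v ∈ sumZero ↔ v 0 + v 1 + v 2 = 0 := by
  simp [sumZero, dotF, LinearMap.mem_ker, LinearMap.sum_apply, Fin.sum_univ_three]

lemma g2co_apply (α x : sumZero) :
    g2co α x = (2 / ((α : Fin 3 → ℚ) 0 * (α : Fin 3 → ℚ) 0 + (α : Fin 3 → ℚ) 1 * (α : Fin 3 → ℚ) 1
      + (α : Fin 3 → ℚ) 2 * (α : Fin 3 → ℚ) 2)) *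
      ((α : Fin 3 → ℚ) 0 * (x : Fin 3 → ℚ) 0 + (α : Fin 3 → ℚ) 1 * (x : Fin 3 → ℚ) 1
      + (α : Fin 3 → ℚ) 2 * (x : Fin 3 → ℚ) 2) := by
  simp [g2co, stdCoroot, dotF, LinearMap.sum_apply, Fin.sum_univ_three]
  ring

-- the long roots 2eᵢ-eⱼ-e_k and the short root e₀-e₁, as elements of sumZero
noncomputable def B1 : sumZero := ⟨![2,-1,-1], by rw [mem_sumZero]; norm_num [Matrix.cons_val_two]⟩
noncomputable def B2 : sumZero := ⟨![-1,2,-1], by rw [mem_sumZero]; norm_num [Matrix.cons_val_two]⟩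
noncomputable def B3 : sumZero := ⟨![-1,-1,2], by rw [mem_sumZero]; norm_num [Matrix.cons_val_two]⟩
noncomputable def G1 : sumZero := ⟨![1,-1,0], by rw [mem_sumZero]; norm_num [Matrix.cons_val_two]⟩

lemma B1_mem : B1 ∈ g2Φ := by
  refine Or.inr ⟨0, 1, 2, by decide, by decide, by decide, Or.inl ?_⟩
  funext i; fin_cases i <;> simp [B1, eVec] <;> norm_num

lemma B2_mem : B2 ∈ g2Φ := by
  refine Or.inr ⟨1, 0, 2, by decide, by decide, by decide, Or.inl ?_⟩
  funext i; fin_cases i <;> simp [B2, eVec] <;> norm_num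

lemma B3_mem : B3 ∈ g2Φ := by
  refine Or.inr ⟨2, 0, 1, by decide, by decide, by decide, Or.inl ?_⟩
  funext i; fin_cases i <;> simp [B3, eVec] <;> norm_num

lemma G1_mem : G1 ∈ g2Φ := by
  refine Or.inl ⟨0, 1, by decide, ?_⟩
  funext i; fin_cases i <;> simp [G1, eVec] <;> norm_num

lemma B1_self : g2co B1 B1 = 2 := by rw [g2co_apply]; norm_num [B1, Matrix.cons_val_two]
lemma B2_self : g2co B2 B2 = 2 := by rw [g2co_apply]; norm_num [B2, Matrix.cons_val_two]
lemma B3_self : g2co B3 B3 = 2 := by rw [g2co_apply]; norm_num [B3, Matrix.cons_val_two]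
lemma G1_self : g2co G1 G1 = 2 := by rw [g2co_apply]; norm_num [G1, Matrix.cons_val_two]

/-- the reflection in a root `τ` with `g2co τ τ = 2` lies in the Weyl group -/
lemma refl_mem_weyl {τ : sumZero} (hτ : τ ∈ g2Φ) (h2 : g2co τ τ = 2) :
    Module.reflection h2 ∈ weylGroup g2Φ g2co :=
  Subgroup.subset_closure ⟨τ, hτ, fun x => by rw [Module.reflection_apply]⟩

lemma coact_refl {τ : sumZero} (h2 : g2co τ τ = 2) (f : Module.Dual ℚ sumZero) (x : sumZero) :
    coact (Module.reflection h2) f x = f x - g2co τ x * f τ := by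
  simp [coact, Module.reflection_symm, Module.reflection_apply, map_sub, map_smul,
    smul_eq_mul, mul_comm]

lemma ratio_cases {x y : ℚ} (hy : y ≠ 0) (h : x / y ∈ ({-1, 0, 1} : Set ℚ)) :
    x = -y ∨ x = 0 ∨ x = y := by
  simp only [Set.mem_insert_iff, Set.mem_singleton_iff, div_eq_iff hy] at h
  rcases h with h | h | h
  · left; linarith
  · right; left; linarith
  · right; right; linarith

theorem statement4' (χ : QC.sumZero)
    (hqc : QC.IsQuasiConstant QC.g2Φ QC.g2co χ) : χ = 0 := by
  set a := (χ : Fin 3 → ℚ) 0 with ha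
  set b := (χ : Fin 3 → ℚ) 1 with hb
  have hc : (χ : Fin 3 → ℚ) 2 = -a - b := by
    have := (mem_sumZero _).mp χ.2
    linarith
  have cB1 : g2co B1 χ = a := by rw [g2co_apply]; simp [B1, hc]; ring
  have cB2 : g2co B2 χ = b := by rw [g2co_apply]; simp [B2, hc]; ring
  have cB3 : g2co B3 χ = -a - b := by rw [g2co_apply]; simp [B3, hc]; ring
  have cG1 : g2co G1 χ = a - b := by rw [g2co_apply]; simp [G1, hc]; ring
  -- pairings between roots
  have p13 : g2co B1 B3 = -1 := by rw [g2co_apply]; norm_num [B1, B3, Matrix.cons_val_two]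
  have p12 : g2co B1 B2 = -1 := by rw [g2co_apply]; norm_num [B1, B2, Matrix.cons_val_two]
  have pG1B1 : g2co G1 B1 = 3 := by rw [g2co_apply]; norm_num [G1, B1, Matrix.cons_val_two]
  have pG1B2 : g2co G1 B2 = -3 := by rw [g2co_apply]; norm_num [G1, B2, Matrix.cons_val_two]
  -- key quasi-constancy instances
  have key : ∀ (α τ : sumZero) (hα : α ∈ g2Φ) (hτ : τ ∈ g2Φ) (h2 : g2co τ τ = 2),
      g2co α χ ≠ 0 → (g2co α χ - g2co τ χ * g2co α τ) / g2co α χ ∈ ({-1, 0, 1} : Set ℚ) := by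
    intro α τ hα hτ h2 hne
    have := hqc α hα hne (Module.reflection h2) (refl_mem_weyl hτ h2)
    rwa [coact_refl] at this
  suffices h : a = 0 ∧ b = 0 by
    ext i; fin_cases i <;> simp [← ha, ← hb, hc, h.1, h.2]
  by_contra hab
  rcases ne_or_eq a 0 with haz | haz
  · have A := key B1 B3 B1_mem B3_mem B3_self (by rwa [cB1])
    rw [cB1, cB3, p13] at A
    rcases ratio_cases haz A with h | h | h
    · -- b = a
      have hba : b = a := by linarith
      have B := key B1 B2 B1_mem B2_mem B2_self (by rwa [cB1])
      rw [cB1, cB2, p12, hba] at B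
      rcases ratio_cases haz B with h' | h' | h' <;> exact haz (by linarith)
    · -- b = 0
      have hb0 : b = 0 := by linarith
      have hG : a - b ≠ 0 := by rw [hb0]; simpa using haz
      have C := key G1 B1 G1_mem B1_mem B1_self (by rwa [cG1])
      rw [cG1, cB1, pG1B1, hb0] at C
      have hG2 : a - (0:ℚ) ≠ 0 := by simpa using haz
      rcases ratio_cases hG2 C with h' | h' | h' <;> exact haz (by linarith)
    · -- b = -a
      have hbna : b = -a := by linarith
      have hG : a - b ≠ 0 := by rw [hbna]; intro h'; exact haz (by linarith)
      have C := key G1 B1 G1_mem B1_mem B1_self (by rwa [cG1])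
      rw [cG1, cB1, pG1B1, hbna] at C
      have hG2 : a - -a ≠ 0 := by intro h'; exact haz (by linarith)
      rcases ratio_cases hG2 C with h' | h' | h' <;> exact haz (by linarith)
  · have hbz : b ≠ 0 := by intro h; exact hab ⟨haz, h⟩
    have hG : a - b ≠ 0 := by rw [haz]; simpa using hbz
    have D := key G1 B2 G1_mem B2_mem B2_self (by rwa [cG1])
    rw [cG1, cB2, pG1B2, haz] at D
    have hG2 : (0:ℚ) - b ≠ 0 := by simpa using hbz
    rcases ratio_cases hG2 D with h | h | h <;> exact hbz (by linarith)

end QC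

/-- Lemma 3.2 of the paper. For the root system of type `G₂` in
`V = {x ∈ ℚ³ : x₁ + x₂ + x₃ = 0}`, no nonzero element of the weight lattice is
quasi-constant. -/
theorem statement4 (χ : QC.sumZero) (hχ : χ ∈ QC.weightLattice QC.g2Φ QC.g2co)
    (hqc : QC.IsQuasiConstant QC.g2Φ QC.g2co χ) : χ = 0 := by
  exact QC.statement4' χ hqc
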